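/- arXiv:2305.15514 — 2 statements merged into one kernel-verified Lean document; each statement's English description precedes it below -/
import Mathlib

section
/- Let H ≥ 0 be a real number and define the quadratic polynomial p_C(x) = (H²+1)x² − (1+2HC)x + C² for a real parameter C, and set x⁻ = (H − √(H²+1))/2 and x⁺ = (H + √(H²+1))/2. Then: (i) p_C has a real root if and only if x⁻ ≤ C ≤ x⁺; (ii) if x⁻ ≤ C ≤ x⁺, then both (real) roots of p_C are nonnegative; (iii) p_C has a double root if and only if C = x⁻ or C = x⁺. -/
/-! The discriminant of `p_C` is `(H² + 1) - (2C - H)²`, so `p_C` has a real root exactly when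
`|2C - H| ≤ √(H² + 1)`, i.e. `x⁻ ≤ C ≤ x⁺`, and a double root exactly at the endpoints.
In that window `4HC ≥ 4C² - 1 ≥ -1`, so the linear coefficient `-(1 + 2HC)` is negative while the
other two are nonnegative, which rules out negative roots. -/

theorem hasDerivAt_quadratic {𝕜 : Type*} [NontriviallyNormedField 𝕜] (a b c x : 𝕜) :
    HasDerivAt (fun x => a * (x * x) + b * x + c) (2 * a * x + b) x := by
  refine (((((hasDerivAt_id' x).mul (hasDerivAt_id' x)).const_mul a).add
    ((hasDerivAt_id' x).const_mul b)).add_const c).congr_deriv ?_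
  ring

theorem exists_quadratic_eq_zero_and_eq_zero_iff {K : Type*} [Field K] [NeZero (2 : K)]
    {a b c : K} (ha : a ≠ 0) :
    (∃ x, a * (x * x) + b * x + c = 0 ∧ 2 * a * x + b = 0) ↔ discrim a b c = 0 := by
  constructor
  · rintro ⟨x, hx, hx'⟩
    rw [discrim_eq_sq_of_quadratic_eq_zero hx, hx', zero_pow two_ne_zero]
  · intro hd
    refine ⟨-b / (2 * a), (quadratic_eq_zero_iff_of_discrim_eq_zero ha hd _).2 rfl, ?_⟩
    field_simp
    ring

theorem exists_quadratic_eq_zero_iff_discrim_nonneg {a b c : ℝ} (ha : a ≠ 0) :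
    (∃ x, a * (x * x) + b * x + c = 0) ↔ 0 ≤ discrim a b c := by
  constructor
  · rintro ⟨x, hx⟩
    rw [discrim_eq_sq_of_quadratic_eq_zero hx]
    exact sq_nonneg _
  · intro hd
    exact exists_quadratic_eq_zero ha ⟨√(discrim a b c), (Real.mul_self_sqrt hd).symm⟩

theorem nonneg_of_quadratic_eq_zero {R : Type*} [CommRing R] [LinearOrder R]
    [IsStrictOrderedRing R] {a b c x : R} (ha : 0 ≤ a) (hb : b < 0) (hc : 0 ≤ c)
    (hx : a * (x * x) + b * x + c = 0) : 0 ≤ x := by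
  by_contra! hx0
  nlinarith [mul_nonneg ha (mul_self_nonneg x), mul_pos_of_neg_of_neg hb hx0]

section Window

variable {H C d : ℝ}

theorem two_mul_sub_sq_le_iff (hd : 0 ≤ d) :
    (2 * C - H) ^ 2 ≤ d ↔ (H - √d) / 2 ≤ C ∧ C ≤ (H + √d) / 2 := by
  rw [Real.sq_le hd]
  constructor <;> rintro ⟨h₁, h₂⟩ <;> constructor <;> linarith

theorem two_mul_sub_sq_eq_iff (hd : 0 ≤ d) :
    (2 * C - H) ^ 2 = d ↔ C = (H - √d) / 2 ∨ C = (H + √d) / 2 := by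
  conv_lhs => rw [← Real.sq_sqrt hd]
  rw [sq_eq_sq_iff_eq_or_eq_neg]
  constructor <;> rintro (h | h) <;> [right; left; right; left] <;> linarith

end Window

theorem discrim_sphere_profile (H C : ℝ) :
    discrim (H ^ 2 + 1) (-(1 + 2 * H * C)) (C ^ 2) = H ^ 2 + 1 - (2 * C - H) ^ 2 := by
  rw [discrim]
  ring

theorem stmt_0_general (H C : ℝ)
    (p : ℝ → ℝ) (hp : ∀ x, p x = (H ^ 2 + 1) * x ^ 2 - (1 + 2 * H * C) * x + C ^ 2)
    (xm xp : ℝ) (hxm : xm = (H - Real.sqrt (H ^ 2 + 1)) / 2)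
    (hxp : xp = (H + Real.sqrt (H ^ 2 + 1)) / 2) :
    ((∃ x : ℝ, p x = 0) ↔ xm ≤ C ∧ C ≤ xp) ∧
    ((xm ≤ C ∧ C ≤ xp) → ∀ x : ℝ, p x = 0 → 0 ≤ x) ∧
    ((∃ x : ℝ, p x = 0 ∧ deriv p x = 0) ↔ (C = xm ∨ C = xp)) := by
  have hp' : p = fun x => (H ^ 2 + 1) * (x * x) + -(1 + 2 * H * C) * x + C ^ 2 :=
    funext fun x => by rw [hp]; ring
  subst hp' hxm hxp
  have ha : 0 < H ^ 2 + 1 := by positivity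
  refine ⟨?_, ?_, ?_⟩
  · rw [exists_quadratic_eq_zero_iff_discrim_nonneg ha.ne', discrim_sphere_profile, sub_nonneg,
      two_mul_sub_sq_le_iff ha.le]
  · intro hC x hx
    have hb : 0 < 1 + 2 * H * C := by
      nlinarith [(two_mul_sub_sq_le_iff ha.le).2 hC, sq_nonneg C]
    exact nonneg_of_quadratic_eq_zero ha.le (neg_neg_of_pos hb) (sq_nonneg C) hx
  · simp only [fun x => (hasDerivAt_quadratic (H ^ 2 + 1) (-(1 + 2 * H * C)) (C ^ 2) x).deriv]
    rw [exists_quadratic_eq_zero_and_eq_zero_iff ha.ne', discrim_sphere_profile, sub_eq_zero,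
      eq_comm, two_mul_sub_sq_eq_iff ha.le]

/-- Root analysis of the polynomial `p_C(x) = (H²+1)x² − (1+2HC)x + C²` governing
rotational cmc `H` surfaces in `S³`. -/
theorem stmt_0 (H C : ℝ) (hH : 0 ≤ H)
    (p : ℝ → ℝ) (hp : ∀ x, p x = (H ^ 2 + 1) * x ^ 2 - (1 + 2 * H * C) * x + C ^ 2)
    (xm xp : ℝ) (hxm : xm = (H - Real.sqrt (H ^ 2 + 1)) / 2)
    (hxp : xp = (H + Real.sqrt (H ^ 2 + 1)) / 2) :
    ((∃ x : ℝ, p x = 0) ↔ xm ≤ C ∧ C ≤ xp) ∧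
    ((xm ≤ C ∧ C ≤ xp) → ∀ x : ℝ, p x = 0 → 0 ≤ x) ∧
    ((∃ x : ℝ, p x = 0 ∧ deriv p x = 0) ↔ (C = xm ∨ C = xp)) :=
  stmt_0_general H C p hp xm xp hxm hxp
end

section
/- Let H > 1 be a real number and define the quadratic polynomial p_C(x) = (H²−1)x² − (1+2HC)x + C² for a real parameter C. Then: (i) if C ≥ −(H − √(H²−1))/2, then p_C has two real roots and both are nonnegative; (ii) if C ≤ −(H + √(H²−1))/2, then p_C has two real roots and both are nonpositive; (iii) if −(H + √(H²−1))/2 < C < −(H − √(H²−1))/2, then p_C has no real roots. -/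
/-- Root analysis of `p_C(x) = (H²−1)x² − (1+2HC)x + C²` governing elliptic rotational
cmc `H` surfaces with `H² > 1` in `H³`. -/
theorem stmt_1 (H C : ℝ) (hH : 1 < H)
    (p : ℝ → ℝ) (hp : ∀ x, p x = (H ^ 2 - 1) * x ^ 2 - (1 + 2 * H * C) * x + C ^ 2) :
    (C ≥ -(H - Real.sqrt (H ^ 2 - 1)) / 2 →
      ∃ x₁ x₂ : ℝ, (∀ x, p x = (H ^ 2 - 1) * (x - x₁) * (x - x₂)) ∧ 0 ≤ x₁ ∧ 0 ≤ x₂) ∧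
    (C ≤ -(H + Real.sqrt (H ^ 2 - 1)) / 2 →
      ∃ x₁ x₂ : ℝ, (∀ x, p x = (H ^ 2 - 1) * (x - x₁) * (x - x₂)) ∧ x₁ ≤ 0 ∧ x₂ ≤ 0) ∧
    (-(H + Real.sqrt (H ^ 2 - 1)) / 2 < C → C < -(H - Real.sqrt (H ^ 2 - 1)) / 2 →
      ∀ x : ℝ, p x ≠ 0) := by
  have ha : (0:ℝ) < H ^ 2 - 1 := by nlinarith
  set s := Real.sqrt (H ^ 2 - 1) with hs_def
  have hs0 : 0 ≤ s := Real.sqrt_nonneg _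
  have hs : s ^ 2 = H ^ 2 - 1 := Real.sq_sqrt ha.le
  refine ⟨?_, ?_, ?_⟩
  · intro hC
    have hHs : s ≤ H := by nlinarith
    have h1 : 2 * H * (-(H - s) / 2) ≤ 2 * H * C :=
      mul_le_mul_of_nonneg_left hC (by linarith)
    have h2 : 0 ≤ s * (H - s) := mul_nonneg hs0 (by linarith)
    have hb : 0 ≤ 1 + 2 * H * C := by nlinarith
    have hD : 0 ≤ 4 * C ^ 2 + 4 * H * C + 1 := by nlinarith [sq_nonneg (2*C + H - s)]
    set d := Real.sqrt (4 * C ^ 2 + 4 * H * C + 1) with hd_def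
    have hd0 : 0 ≤ d := Real.sqrt_nonneg _
    have hd : d ^ 2 = 4 * C ^ 2 + 4 * H * C + 1 := Real.sq_sqrt hD
    have hdb : d ≤ 1 + 2 * H * C := by
      nlinarith [sq_nonneg (d - (1 + 2 * H * C)), sq_nonneg C]
    refine ⟨(1 + 2 * H * C - d) / (2 * (H ^ 2 - 1)),
            (1 + 2 * H * C + d) / (2 * (H ^ 2 - 1)), ?_, ?_, ?_⟩
    · intro x
      rw [hp]
      field_simp
      ring_nf
      nlinarith [hd]
    · exact div_nonneg (by linarith) (by positivity)
    · exact div_nonneg (by linarith) (by positivity)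
  · intro hC
    have hb : 1 + 2 * H * C ≤ 0 := by nlinarith
    have hD : 0 ≤ 4 * C ^ 2 + 4 * H * C + 1 := by nlinarith
    set d := Real.sqrt (4 * C ^ 2 + 4 * H * C + 1) with hd_def
    have hd0 : 0 ≤ d := Real.sqrt_nonneg _
    have hd : d ^ 2 = 4 * C ^ 2 + 4 * H * C + 1 := Real.sq_sqrt hD
    have hdb : d ≤ -(1 + 2 * H * C) := by
      nlinarith [sq_nonneg (d + (1 + 2 * H * C)), sq_nonneg C]
    refine ⟨(1 + 2 * H * C - d) / (2 * (H ^ 2 - 1)),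
            (1 + 2 * H * C + d) / (2 * (H ^ 2 - 1)), ?_, ?_, ?_⟩
    · intro x
      rw [hp]
      field_simp
      ring_nf
      nlinarith [hd]
    · apply div_nonpos_of_nonpos_of_nonneg <;> [linarith; positivity]
    · apply div_nonpos_of_nonpos_of_nonneg <;> [linarith; positivity]
  · intro h1 h2 x hx
    have hD : 4 * C ^ 2 + 4 * H * C + 1 < 0 := by nlinarith
    rw [hp] at hx
    nlinarith [sq_nonneg (2 * (H ^ 2 - 1) * x - (1 + 2 * H * C))]
end
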